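/- arXiv:2412.08456 — 7 statements merged into one kernel-verified Lean document; each statement's English description precedes it below -/
import Mathlib

section
/- Let X and Y be real random variables with finite means, distribution functions F and G, and right support endpoints u_X and u_Y, and let p_0 ∈ (0,1). Then X ≤_{p_0-tvar-rl} Y if, and only if, ∫_p^1 F^{-1}(u + (1-u)F(t)) du ≤ ∫_p^1 G^{-1}(u + (1-u)G(t)) du for all t < u_X, u_Y and all p ∈ [p_0, 1). -/
/-!
For `t` with `F t < 1` and `u ∈ (0, 1)`, the residual life `X_t` has quantile
`F_t⁻¹(u) = F⁻¹(u + (1 - u) F(t)) - t`, since `u ≤ F_t(x)` means exactly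
`u + (1 - u) F(t) ≤ F(x + t)`. Integrating over `[p, 1]`, both tail integrals of the
residual quantiles differ from the corresponding integrals of `F⁻¹(u + (1 - u) F(t))` by the
same constant `(1 - p) t`. Finite means make all these integrals genuine: the quantile function
pushes Lebesgue measure on `(0, 1)` forward to the law of the variable, so it is integrable.
-/

open MeasureTheory ProbabilityTheory

/-- The quantile (Value at Risk) of a distribution function `F` at level `p`:
`F^{-1}(p) = inf {x : F x ≥ p}`. -/
noncomputable def quantile (F : ℝ → ℝ) (p : ℝ) : ℝ := sInf {x : ℝ | p ≤ F x}

/-- The distribution function of the residual life `X_t = [X - t ∣ X > t]`: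
`F_t(x) = (F(x+t) - F(t))/(1 - F(t))` for `x ≥ 0`, and `0` otherwise. -/
noncomputable def resCDF (F : ℝ → ℝ) (t : ℝ) (x : ℝ) : ℝ :=
  if 0 ≤ x then (F (x + t) - F t) / (1 - F t) else 0

/-- The quantile function of the residual life `X_t`. -/
noncomputable def resQuantile (F : ℝ → ℝ) (t : ℝ) (p : ℝ) : ℝ :=
  quantile (resCDF F t) p

/-- `X ≤_{p₀-tvar-rl} Y`, expressed through the distribution functions `F` of `X` and `G` of `Y`:
`∫_p^1 F_t^{-1}(u) du ≤ ∫_p^1 G_t^{-1}(u) du` for all `p ∈ [p₀, 1)` and all `t` below the right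
endpoints of the supports of `X` and `Y` (equivalently, `F t < 1` and `G t < 1`). -/
def TvarRlLE (F G : ℝ → ℝ) (p₀ : ℝ) : Prop :=
  ∀ t : ℝ, F t < 1 → G t < 1 → ∀ p ∈ Set.Ico p₀ 1,
    (∫ u in p..1, resQuantile F t u) ≤ ∫ u in p..1, resQuantile G t u

open Set Filter Topology

lemma Real.sInf_preimage_add_const {S : Set ℝ} (hne : S.Nonempty) (hbdd : BddBelow S) (t : ℝ) :
    sInf ((· + t) ⁻¹' S) = sInf S - t := by
  simpa only [OrderIso.addRight_apply, image_add_right, neg_neg, sub_eq_add_neg] using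
    ((OrderIso.addRight (-t)).map_csInf' hne hbdd).symm

lemma IntervalIntegrable.comp_add_mul {f : ℝ → ℝ} {a b c d : ℝ} (hc : c ≠ 0)
    (hf : IntervalIntegrable f volume (d + c * a) (d + c * b)) :
    IntervalIntegrable (fun x => f (d + c * x)) volume a b := by
  simpa [hc] using (hf.comp_add_left d).comp_mul_left (c := c)

lemma setOf_le_resCDF {F : ℝ → ℝ} (hF : Monotone F) {t u : ℝ} (ht : F t < 1) (hu : 0 < u) :
    {x | u ≤ resCDF F t x} = (· + t) ⁻¹' {y | u + (1 - u) * F t ≤ F y} := by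
  ext x
  have h1 : 0 < 1 - F t := sub_pos.mpr ht
  simp only [resCDF, mem_ofPred_eq, mem_preimage]
  split_ifs with hx
  · rw [le_div_iff₀ h1]
    constructor <;> intro h <;> linarith
  · have : F (x + t) ≤ F t := hF (by linarith)
    constructor <;> intro h <;> nlinarith

section Quantile

variable (μ : Measure ℝ)

lemma bddBelow_setOf_le_cdf {p : ℝ} (hp : 0 < p) : BddBelow {x | p ≤ cdf μ x} := by
  obtain ⟨y, hy⟩ := eventually_atBot.mp ((tendsto_cdf_atBot μ).eventually_lt_const hp)
  exact ⟨y, fun x hx => le_of_not_gt fun h => (hy x h.le).not_ge hx⟩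

lemma nonempty_setOf_le_cdf {p : ℝ} (hp : p < 1) : {x | p ≤ cdf μ x}.Nonempty := by
  obtain ⟨x, hx⟩ := ((tendsto_cdf_atTop μ).eventually_const_lt hp).exists
  exact ⟨x, hx.le⟩

lemma le_cdf_quantile {p : ℝ} (hp1 : p < 1) : p ≤ cdf μ (quantile (fun x => cdf μ x) p) := by
  have h_gt : ∀ x > quantile (fun x => cdf μ x) p, p ≤ cdf μ x := fun x hx => by
    obtain ⟨s, hs, hsx⟩ := exists_lt_of_csInf_lt (nonempty_setOf_le_cdf μ hp1) hx
    exact hs.trans (monotone_cdf μ hsx.le)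
  exact ge_of_tendsto
    ((cdf μ).right_continuous _ |>.mono_left (nhdsWithin_mono _ Ioi_subset_Ici_self))
    (eventually_nhdsWithin_of_forall h_gt)

lemma quantile_le_iff {p y : ℝ} (hp0 : 0 < p) (hp1 : p < 1) :
    quantile (fun x => cdf μ x) p ≤ y ↔ p ≤ cdf μ y :=
  ⟨fun h => (le_cdf_quantile μ hp1).trans (monotone_cdf μ h),
    fun h => csInf_le (bddBelow_setOf_le_cdf μ hp0) h⟩

lemma monotoneOn_quantile : MonotoneOn (quantile (fun x => cdf μ x)) (Ioo 0 1) :=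
  fun _ hp _ hq hpq => csInf_le_csInf (bddBelow_setOf_le_cdf μ hp.1) (nonempty_setOf_le_cdf μ hq.2)
    fun _ hx => hpq.trans hx

lemma aemeasurable_quantile :
    AEMeasurable (quantile (fun x => cdf μ x)) (volume.restrict (Ioo 0 1)) :=
  aemeasurable_restrict_of_monotoneOn measurableSet_Ioo (monotoneOn_quantile μ)

lemma map_quantile_volume_Ioo [IsProbabilityMeasure μ] :
    (volume.restrict (Ioo 0 1)).map (quantile (fun x => cdf μ x)) = μ := by
  have hQ := aemeasurable_quantile μ
  have : IsProbabilityMeasure (volume.restrict (Ioo (0 : ℝ) 1)) := ⟨by simp⟩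
  have : IsProbabilityMeasure ((volume.restrict (Ioo 0 1)).map (quantile (fun x => cdf μ x))) :=
    Measure.isProbabilityMeasure_map hQ
  refine Measure.ext_of_Iic _ μ fun x => ?_
  have h_preimage : quantile (fun x => cdf μ x) ⁻¹' Iic x ∩ Ioo 0 1 = Iic (cdf μ x) ∩ Ioo 0 1 := by
    ext p
    simp only [mem_inter_iff, mem_preimage, mem_Iic, mem_Ioo, and_congr_left_iff]
    exact fun hp => quantile_le_iff μ hp.1 hp.2
  rw [Measure.map_apply_of_aemeasurable hQ measurableSet_Iic,
    Measure.restrict_apply' measurableSet_Ioo, h_preimage,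
    measure_congr ((ae_eq_refl _).inter Ioo_ae_eq_Ioc), inter_comm, Ioc_inter_Iic,
    min_eq_right (cdf_le_one μ x), Real.volume_Ioc, sub_zero, ofReal_cdf]

lemma integrableOn_quantile [IsProbabilityMeasure μ] (hμ : Integrable id μ) :
    IntegrableOn (quantile (fun x => cdf μ x)) (Ioo 0 1) := by
  rw [← map_quantile_volume_Ioo μ] at hμ
  exact (integrable_map_measure aestronglyMeasurable_id (aemeasurable_quantile μ)).mp hμ

lemma resQuantile_cdf {t u : ℝ} (ht : cdf μ t < 1) (hu0 : 0 < u) (hu1 : u < 1) :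
    resQuantile (fun x => cdf μ x) t u
      = quantile (fun x => cdf μ x) (u + (1 - u) * cdf μ t) - t := by
  have hc := cdf_nonneg μ t
  rw [resQuantile, quantile, setOf_le_resCDF (monotone_cdf μ) ht hu0,
    Real.sInf_preimage_add_const (nonempty_setOf_le_cdf μ (by nlinarith))
      (bddBelow_setOf_le_cdf μ (by nlinarith)), quantile]

lemma intervalIntegrable_quantile_cdf [IsProbabilityMeasure μ] (hμ : Integrable id μ) {t p : ℝ}
    (ht : cdf μ t < 1) (hp0 : 0 < p) (hp1 : p < 1) :
    IntervalIntegrable (fun u => quantile (fun x => cdf μ x) (u + (1 - u) * cdf μ t))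
      volume p 1 := by
  have hc := cdf_nonneg μ t
  have hQ : IntervalIntegrable (quantile (fun x => cdf μ x)) volume
      (cdf μ t + (1 - cdf μ t) * p) (cdf μ t + (1 - cdf μ t) * 1) := by
    rw [mul_one, add_sub_cancel, intervalIntegrable_iff_integrableOn_Ioo_of_le (by nlinarith)]
    exact (integrableOn_quantile μ hμ).mono_set (Ioo_subset_Ioo_left (by nlinarith))
  convert hQ.comp_add_mul (sub_pos.mpr ht).ne' using 3 with u
  ring

lemma integral_resQuantile_cdf [IsProbabilityMeasure μ] (hμ : Integrable id μ) {t p : ℝ}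
    (ht : cdf μ t < 1) (hp0 : 0 < p) (hp1 : p < 1) :
    ∫ u in p..1, resQuantile (fun x => cdf μ x) t u
      = (∫ u in p..1, quantile (fun x => cdf μ x) (u + (1 - u) * cdf μ t)) - (1 - p) * t := by
  have h_congr : ∀ᵐ u, u ∈ uIoc p 1 →
      resQuantile (fun x => cdf μ x) t u
        = quantile (fun x => cdf μ x) (u + (1 - u) * cdf μ t) - t := by
    filter_upwards [compl_mem_ae_iff.mpr (measure_singleton (1 : ℝ))] with u hu1 hu
    rw [uIoc_of_le hp1.le] at hu
    exact resQuantile_cdf μ ht (hp0.trans hu.1) (hu.2.lt_of_ne hu1)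
  rw [intervalIntegral.integral_congr_ae h_congr,
    intervalIntegral.integral_sub (intervalIntegrable_quantile_cdf μ hμ ht hp0 hp1)
      intervalIntegrable_const, intervalIntegral.integral_const, smul_eq_mul]

end Quantile

/-- `X ≤_{p₀-tvar-rl} Y` if and only if
`∫_p^1 F^{-1}(u + (1-u)F(t)) du ≤ ∫_p^1 G^{-1}(u + (1-u)G(t)) du`
for all `t` below the right endpoints of the supports and all `p ∈ [p₀, 1)`. -/
theorem stmt1 (μ ν : Measure ℝ) [IsProbabilityMeasure μ] [IsProbabilityMeasure ν]
    (hμ : Integrable id μ) (hν : Integrable id ν)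
    (p₀ : ℝ) (hp₀ : p₀ ∈ Set.Ioo (0 : ℝ) 1) :
    TvarRlLE (fun x => cdf μ x) (fun x => cdf ν x) p₀ ↔
      ∀ t : ℝ, cdf μ t < 1 → cdf ν t < 1 → ∀ p ∈ Set.Ico p₀ 1,
        (∫ u in p..1, quantile (fun x => cdf μ x) (u + (1 - u) * cdf μ t))
          ≤ ∫ u in p..1, quantile (fun x => cdf ν x) (u + (1 - u) * cdf ν t) := by
  refine forall₄_congr fun t htμ htν p => forall_congr' fun hp => ?_
  have hp0 : 0 < p := hp₀.1.trans_le hp.1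
  rw [integral_resQuantile_cdf μ hμ htμ hp0 hp.2, integral_resQuantile_cdf ν hν htν hp0 hp.2,
    sub_le_sub_iff_right]
end

section
/- Fix p_0 ∈ (0,1). Let X(p_0) be the random variable with distribution function F_{p_0}(t) = 0 for t < p_0, F_{p_0}(t) = t for p_0 ≤ t < 1, and F_{p_0}(t) = 1 for t ≥ 1 (a mixture of a point mass at p_0 with weight p_0 and a uniform distribution on (p_0,1) with weight 1 - p_0), and let Y be uniformly distributed on (0,1). Then for every p ∈ [p_0, 1): the residual life quantiles satisfy F_{p_0,t}^{-1}(p) = p - t for t < p_0, and F_{p_0,t}^{-1}(p) = p(1-t) for p_0 ≤ t < 1, while G_t^{-1}(p) = p - t for t < 0 and G_t^{-1}(p) = p(1-t) for 0 ≤ t < 1; consequently X(p_0) ≤_{p-rl} Y for all p ∈ [p_0,1), and hence X(p_0) ≤_{p_0-tvar-rl} Y. -/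
open MeasureTheory ProbabilityTheory

/-- The distribution function of `X(p₀)`: a mixture of a point mass at `p₀` (weight `p₀`) and a
uniform distribution on `(p₀, 1)` (weight `1 - p₀`). -/
noncomputable def Fmix (p₀ : ℝ) (t : ℝ) : ℝ := if t < p₀ then 0 else if t < 1 then t else 1

/-- The distribution function of a uniform random variable on `(0,1)`. -/
noncomputable def Gunif (t : ℝ) : ℝ := if t < 0 then 0 else if t < 1 then t else 1

/-- A common generalization of `Fmix` and `Gunif`. -/
noncomputable def step (a t : ℝ) : ℝ := if t < a then 0 else if t < 1 then t else 1

lemma Fmix_eq (p₀ : ℝ) : Fmix p₀ = step p₀ := rfl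

lemma Gunif_eq : Gunif = step 0 := rfl

lemma stepQ1 {a t p : ℝ} (ht : t < a) (hap : a ≤ p) (hp0 : 0 < p) (hp1 : p ≤ 1) :
    resQuantile (step a) t p = p - t := by
  have hFt : step a t = 0 := if_pos ht
  have hset : {x : ℝ | p ≤ resCDF (step a) t x} = Set.Ici (p - t) := by
    ext x
    simp only [Set.mem_setOf_eq, Set.mem_Ici, resCDF, hFt, sub_zero, div_one]
    constructor
    · intro hx
      by_cases hx0 : 0 ≤ x
      · rw [if_pos hx0] at hx
        simp only [step] at hx
        split_ifs at hx with h1 h2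
        · linarith
        · linarith
        · push_neg at h2; linarith
      · rw [if_neg hx0] at hx; linarith
    · intro hx
      have hx0 : 0 ≤ x := by linarith
      rw [if_pos hx0]
      simp only [step]
      split_ifs with h1 h2
      · linarith
      · linarith
      · linarith
  rw [resQuantile, quantile, hset, csInf_Ici]

lemma stepQ2 {a t p : ℝ} (hat : a ≤ t) (ht1 : t < 1) (hp0 : 0 < p) (hp1 : p ≤ 1) :
    resQuantile (step a) t p = p * (1 - t) := by
  have hFt : step a t = t := by
    rw [step, if_neg (not_lt.2 hat), if_pos ht1]
  have h1t : 0 < 1 - t := by linarith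
  have hset : {x : ℝ | p ≤ resCDF (step a) t x} = Set.Ici (p * (1 - t)) := by
    ext x
    simp only [Set.mem_setOf_eq, Set.mem_Ici, resCDF, hFt]
    constructor
    · intro hx
      by_cases hx0 : 0 ≤ x
      · rw [if_pos hx0, le_div_iff₀ h1t] at hx
        simp only [step] at hx
        split_ifs at hx with h1 h2
        · linarith
        · linarith
        · push_neg at h2; nlinarith
      · rw [if_neg hx0] at hx; nlinarith
    · intro hx
      have hx0 : 0 ≤ x := le_trans (by positivity) hx
      rw [if_pos hx0, le_div_iff₀ h1t]
      simp only [step]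
      split_ifs with h1 h2
      · nlinarith
      · linarith
      · nlinarith
  rw [resQuantile, quantile, hset, csInf_Ici]

lemma Gunif_lt_one {t : ℝ} (h : Gunif t < 1) : t < 1 := by
  unfold Gunif at h
  split_ifs at h with h1 h2
  · linarith
  · exact h2
  · linarith

lemma keyLE {p₀ t p : ℝ} (h0 : 0 < p₀) (ht : t < 1) (hp : p₀ ≤ p) (hp1 : p ≤ 1) :
    resQuantile (Fmix p₀) t p ≤ resQuantile Gunif t p := by
  rw [Fmix_eq, Gunif_eq]
  have hp0 : 0 < p := lt_of_lt_of_le h0 hp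
  rcases lt_or_ge t 0 with h | h
  · rw [stepQ1 (lt_trans h h0) hp hp0 hp1, stepQ1 h hp0.le hp0 hp1]
  · rcases lt_or_ge t p₀ with h' | h'
    · rw [stepQ1 h' hp hp0 hp1, stepQ2 h ht hp0 hp1]
      nlinarith [mul_nonneg h (sub_nonneg.2 hp1)]
    · rw [stepQ2 h' ht hp0 hp1, stepQ2 h ht hp0 hp1]

/-- For `X(p₀)` as above and `Y` uniform on `(0,1)`: for every `p ∈ [p₀,1)` the residual life
quantiles satisfy `F_{p₀,t}^{-1}(p) = p - t` for `t < p₀` and `F_{p₀,t}^{-1}(p) = p(1-t)` for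
`p₀ ≤ t < 1`, while `G_t^{-1}(p) = p - t` for `t < 0` and `G_t^{-1}(p) = p(1-t)` for
`0 ≤ t < 1`; consequently `X(p₀) ≤_{p-rl} Y` for all `p ∈ [p₀,1)`, and hence
`X(p₀) ≤_{p₀-tvar-rl} Y`. -/
theorem stmt8 (p₀ : ℝ) (hp₀ : p₀ ∈ Set.Ioo (0 : ℝ) 1) :
    (∀ p ∈ Set.Ico p₀ 1,
      (∀ t : ℝ, t < p₀ → resQuantile (Fmix p₀) t p = p - t) ∧
      (∀ t : ℝ, p₀ ≤ t → t < 1 → resQuantile (Fmix p₀) t p = p * (1 - t)) ∧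
      (∀ t : ℝ, t < 0 → resQuantile Gunif t p = p - t) ∧
      (∀ t : ℝ, 0 ≤ t → t < 1 → resQuantile Gunif t p = p * (1 - t)) ∧
      (∀ t : ℝ, Fmix p₀ t < 1 → Gunif t < 1 →
        resQuantile (Fmix p₀) t p ≤ resQuantile Gunif t p)) ∧
    TvarRlLE (Fmix p₀) Gunif p₀ := by
  obtain ⟨h0, h1⟩ := hp₀
  constructor
  · intro p hp
    obtain ⟨hpl, hpu⟩ := hp
    have hp0 : 0 < p := lt_of_lt_of_le h0 hpl
    have hp1 : p ≤ 1 := le_of_lt hpu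
    refine ⟨fun t ht => ?_, fun t ht ht1 => ?_, fun t ht => ?_, fun t ht ht1 => ?_,
      fun t hF hG => ?_⟩
    · rw [Fmix_eq]; exact stepQ1 ht hpl hp0 hp1
    · rw [Fmix_eq]; exact stepQ2 ht ht1 hp0 hp1
    · rw [Gunif_eq]; exact stepQ1 ht hp0.le hp0 hp1
    · rw [Gunif_eq]; exact stepQ2 ht ht1 hp0 hp1
    · exact keyLE h0 (Gunif_lt_one hG) hpl hp1
  · intro t hF hG p hp
    obtain ⟨hpl, hpu⟩ := hp
    have ht1 : t < 1 := Gunif_lt_one hG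
    have hp0 : 0 < p := lt_of_lt_of_le h0 hpl
    have hp1 : p ≤ 1 := le_of_lt hpu
    rcases lt_or_ge t p₀ with hta | hta
    · have hEF : Set.EqOn (resQuantile (Fmix p₀) t) (fun u => u - t) (Set.uIcc p 1) := by
        intro u hu
        rw [Set.uIcc_of_le hp1] at hu
        rw [Fmix_eq]
        exact stepQ1 hta (le_trans hpl hu.1) (lt_of_lt_of_le hp0 hu.1) hu.2
      rw [intervalIntegral.integral_congr hEF]
      rcases lt_or_ge t 0 with ht0 | ht0
      · have hEG : Set.EqOn (resQuantile Gunif t) (fun u => u - t) (Set.uIcc p 1) := by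
          intro u hu
          rw [Set.uIcc_of_le hp1] at hu
          rw [Gunif_eq]
          exact stepQ1 ht0 (lt_of_lt_of_le hp0 hu.1).le (lt_of_lt_of_le hp0 hu.1) hu.2
        rw [intervalIntegral.integral_congr hEG]
      · have hEG : Set.EqOn (resQuantile Gunif t) (fun u => u * (1 - t)) (Set.uIcc p 1) := by
          intro u hu
          rw [Set.uIcc_of_le hp1] at hu
          rw [Gunif_eq]
          exact stepQ2 ht0 ht1 (lt_of_lt_of_le hp0 hu.1) hu.2
        rw [intervalIntegral.integral_congr hEG]
        apply intervalIntegral.integral_mono_on hp1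
        · exact (continuous_id.sub continuous_const).intervalIntegrable p 1
        · exact (continuous_id.mul continuous_const).intervalIntegrable p 1
        · intro u hu
          have := mul_nonneg ht0 (sub_nonneg.2 hu.2)
          nlinarith
    · have hEF : Set.EqOn (resQuantile (Fmix p₀) t) (fun u => u * (1 - t)) (Set.uIcc p 1) := by
        intro u hu
        rw [Set.uIcc_of_le hp1] at hu
        rw [Fmix_eq]
        exact stepQ2 hta ht1 (lt_of_lt_of_le hp0 hu.1) hu.2
      have hEG : Set.EqOn (resQuantile Gunif t) (fun u => u * (1 - t)) (Set.uIcc p 1) := by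
        intro u hu
        rw [Set.uIcc_of_le hp1] at hu
        rw [Gunif_eq]
        exact stepQ2 (le_trans h0.le hta) ht1 (lt_of_lt_of_le hp0 hu.1) hu.2
      rw [intervalIntegral.integral_congr hEF, intervalIntegral.integral_congr hEG]
end

section
/- Fix p_0 ∈ (0,1). Let X(p_0) be the random variable with distribution function F_{p_0}(t) = 0 for t < p_0, F_{p_0}(t) = t for p_0 ≤ t < 1, and F_{p_0}(t) = 1 for t ≥ 1, and let Y be uniformly distributed on (0,1). Then E[X(p_0)] = (p_0^2 + 1)/2 > 1/2 = E[Y], and the hazard rate order X(p_0) ≤_{hr} Y does not hold; in particular, the p_0-tvar-rl order (which holds here, X(p_0) ≤_{p_0-tvar-rl} Y) neither implies the hazard rate order nor preserves expectations. -/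
open MeasureTheory ProbabilityTheory

/-! `Gunif` is `Fmix 0`, and for `0 < u ≤ 1` the quantiles of `Fmix a` and of its residual lives
have closed forms: `max a u`, then `max a u - t` for `t < a` and `u (1 - t)` for `a ≤ t < 1`.
At `t = 0` and level `u < p₀` the atom of `X(p₀)` gives `p₀ > u`, breaking the hazard rate order;
for levels `u ≥ p₀` the residual quantiles of `X(p₀)` lie pointwise below those of `Y`. -/

open Set

lemma quantile_eq_of_setOf_le_eq_Ici {F : ℝ → ℝ} {u a : ℝ} (h : {x | u ≤ F x} = Ici a) :
    quantile F u = a := by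
  rw [quantile, h, csInf_Ici]

lemma Gunif_eq_Fmix_zero : Gunif = Fmix 0 := rfl

section Fmix

variable {a t u : ℝ}

lemma quantile_Fmix (hu : u ∈ Ioc 0 1) : quantile (Fmix a) u = max a u := by
  obtain ⟨hu0, hu1⟩ := hu
  apply quantile_eq_of_setOf_le_eq_Ici
  ext x
  simp only [mem_ofPred_eq, mem_Ici, Fmix, max_le_iff]
  split_ifs <;> constructor <;> intro h <;>
    first | (constructor <;> linarith) | linarith [h.1, h.2]

lemma resQuantile_Fmix_of_lt (ht : t < a) (hu : u ∈ Ioc 0 1) :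
    resQuantile (Fmix a) t u = max a u - t := by
  obtain ⟨hu0, hu1⟩ := hu
  apply quantile_eq_of_setOf_le_eq_Ici
  ext x
  simp only [mem_ofPred_eq, mem_Ici, resCDF, Fmix, if_pos ht, sub_zero, div_one,
    sub_le_iff_le_add, max_le_iff]
  split_ifs <;> constructor <;> intro h <;>
    first | (constructor <;> linarith) | linarith [h.1, h.2]

lemma resQuantile_Fmix_of_le (ht : a ≤ t) (ht1 : t < 1) (hu : u ∈ Ioc 0 1) :
    resQuantile (Fmix a) t u = u * (1 - t) := by
  obtain ⟨hu0, hu1⟩ := hu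
  have h1t : 0 < 1 - t := by linarith
  apply quantile_eq_of_setOf_le_eq_Ici
  ext x
  simp only [mem_ofPred_eq, mem_Ici, resCDF, Fmix, if_neg (not_lt.2 ht), if_pos ht1]
  split_ifs <;> (try rw [le_div_iff₀ h1t]) <;> constructor <;> intro h <;> nlinarith

lemma intervalIntegrable_resQuantile_Fmix (ht1 : t < 1) {p : ℝ} (hp : p ∈ Ioc 0 1) :
    IntervalIntegrable (resQuantile (Fmix a) t) volume p 1 := by
  have hu : ∀ u ∈ uIcc p 1, u ∈ Ioc 0 1 := fun u hu => by
    rw [uIcc_of_le hp.2] at hu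
    exact ⟨hp.1.trans_le hu.1, hu.2⟩
  apply ContinuousOn.intervalIntegrable
  rcases lt_or_ge t a with ht | ht
  · exact (continuous_const.max continuous_id |>.sub continuous_const).continuousOn.congr
      fun u h => resQuantile_Fmix_of_lt ht (hu u h)
  · exact (continuous_id.mul continuous_const).continuousOn.congr
      fun u h => resQuantile_Fmix_of_le ht ht1 (hu u h)

lemma resQuantile_Fmix_le_Gunif (ha : 0 ≤ a) (ht1 : t < 1) (hau : a ≤ u) (hu : u ∈ Ioc 0 1) :
    resQuantile (Fmix a) t u ≤ resQuantile Gunif t u := by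
  rw [Gunif_eq_Fmix_zero]
  rcases lt_or_ge t 0 with ht0 | ht0
  · rw [resQuantile_Fmix_of_lt (ht0.trans_le ha) hu, resQuantile_Fmix_of_lt ht0 hu,
      max_eq_right hau, max_eq_right hu.1.le]
  rw [resQuantile_Fmix_of_le ht0 ht1 hu]
  rcases lt_or_ge t a with hta | hta
  · rw [resQuantile_Fmix_of_lt hta hu, max_eq_right hau]
    nlinarith [hu.2]
  · rw [resQuantile_Fmix_of_le hta ht1 hu]

lemma integral_max_const_id (ha : a ∈ Icc 0 1) :
    ∫ u in (0 : ℝ)..1, max a u = (a ^ 2 + 1) / 2 := by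
  have hint : ∀ b c : ℝ, IntervalIntegrable (fun u => max a u) volume b c :=
    fun b c => (continuous_const.max continuous_id).intervalIntegrable b c
  have below : ∫ u in (0 : ℝ)..a, max a u = ∫ _ in (0 : ℝ)..a, a :=
    intervalIntegral.integral_congr fun u hu => by
      rw [uIcc_of_le ha.1] at hu; exact max_eq_left hu.2
  have above : ∫ u in a..(1 : ℝ), max a u = ∫ u in a..(1 : ℝ), u :=
    intervalIntegral.integral_congr fun u hu => by
      rw [uIcc_of_le ha.2] at hu; exact max_eq_right hu.1
  rw [← intervalIntegral.integral_add_adjacent_intervals (hint 0 a) (hint a 1), below, above,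
    intervalIntegral.integral_const, integral_id, smul_eq_mul]
  ring

lemma integral_quantile_Fmix (ha : a ∈ Icc 0 1) :
    ∫ u in (0 : ℝ)..1, quantile (Fmix a) u = (a ^ 2 + 1) / 2 := by
  rw [← integral_max_const_id ha]
  refine intervalIntegral.integral_congr_ae (.of_forall fun u hu => ?_)
  rw [uIoc_of_le zero_le_one] at hu
  exact quantile_Fmix hu

end Fmix

/-- For `X(p₀)` as above and `Y` uniform on `(0,1)`:
`E[X(p₀)] = (p₀² + 1)/2 > 1/2 = E[Y]` (the means computed as `∫_0^1 F^{-1}(u) du`),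
the hazard rate order `X(p₀) ≤_{hr} Y` fails, yet `X(p₀) ≤_{p₀-tvar-rl} Y` holds; hence the
`p₀-tvar-rl` order neither implies the hazard rate order nor preserves expectations. -/
theorem stmt9 (p₀ : ℝ) (hp₀ : p₀ ∈ Set.Ioo (0 : ℝ) 1) :
    (∫ u in (0:ℝ)..1, quantile (Fmix p₀) u) = (p₀ ^ 2 + 1) / 2 ∧
    (p₀ ^ 2 + 1) / 2 > 1 / 2 ∧
    (∫ u in (0:ℝ)..1, quantile Gunif u) = 1 / 2 ∧
    ¬ (∀ t : ℝ, Fmix p₀ t < 1 → Gunif t < 1 → ∀ p ∈ Set.Ioo (0 : ℝ) 1,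
        resQuantile (Fmix p₀) t p ≤ resQuantile Gunif t p) ∧
    TvarRlLE (Fmix p₀) Gunif p₀ := by
  obtain ⟨hp0, hp1⟩ := hp₀
  refine ⟨integral_quantile_Fmix ⟨hp0.le, hp1.le⟩, by nlinarith, ?_, ?_, ?_⟩
  · rw [Gunif_eq_Fmix_zero, integral_quantile_Fmix ⟨le_rfl, zero_le_one⟩]
    norm_num
  · intro hr
    have hhalf : p₀ / 2 ∈ Ioc 0 1 := ⟨by linarith, by linarith⟩
    have := hr 0 (by simp [Fmix, hp0]) (by norm_num [Gunif]) (p₀ / 2) ⟨hhalf.1, by linarith⟩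
    rw [resQuantile_Fmix_of_lt hp0 hhalf, Gunif_eq_Fmix_zero,
      resQuantile_Fmix_of_le le_rfl one_pos hhalf, max_eq_left (by linarith)] at this
    linarith
  · intro t _ htG p ⟨hp₀p, hp_lt⟩
    have ht1 : t < 1 := by
      by_contra! h
      simp [Gunif, not_lt.2 h, not_lt.2 (zero_le_one.trans h)] at htG
    have hp : p ∈ Ioc 0 1 := ⟨hp0.trans_le hp₀p, hp_lt.le⟩
    refine intervalIntegral.integral_mono_on hp_lt.le (intervalIntegrable_resQuantile_Fmix ht1 hp)
      (by rw [Gunif_eq_Fmix_zero]; exact intervalIntegrable_resQuantile_Fmix ht1 hp)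
      fun u hu => resQuantile_Fmix_le_Gunif hp0.le ht1 (hp₀p.trans hu.1)
        ⟨hp.1.trans_le hu.1, hu.2⟩
end

section
/- Let X and Y be real random variables with finite means, distribution functions F and G, and right support endpoints u_X and u_Y, and let p_0 ∈ (0,1). If max{X_t, F_t^{-1}(p_0)} ≤_{icx} max{Y_t, G_t^{-1}(p_0)} for every t < u_X, u_Y, then X ≤_{p_0-tvar-rl} Y. -/
open MeasureTheory ProbabilityTheory Filter

/-- Monotonicity of the residual-life quantile function on `(0, 1)`, for any `F` tending
to `1` at infinity with `F t < 1`. -/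
lemma resQ_mono (F : ℝ → ℝ) (h1 : Tendsto F atTop (nhds 1))
    (t : ℝ) (ht : F t < 1) {p q : ℝ} (hp : 0 < p) (hpq : p ≤ q) (hq : q < 1) :
    resQuantile F t p ≤ resQuantile F t q := by
  have hden : 0 < 1 - F t := by linarith
  have hc : F t + q * (1 - F t) < 1 := by nlinarith
  apply csInf_le_csInf
  · refine ⟨0, fun x hx => ?_⟩
    by_contra hx0
    push_neg at hx0
    simp only [Set.mem_setOf_eq, resCDF, if_neg (not_le.2 hx0)] at hx
    linarith
  · obtain ⟨x₀, hx₀⟩ := (h1.eventually (eventually_gt_nhds hc)).exists_forall_of_atTop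
    refine ⟨max (x₀ - t) 0, ?_⟩
    have hge : 0 ≤ max (x₀ - t) 0 := le_max_right _ _
    have hxt : x₀ ≤ max (x₀ - t) 0 + t := by
      have := le_max_left (x₀ - t) 0; linarith
    simp only [Set.mem_setOf_eq, resCDF, if_pos hge]
    rw [le_div_iff₀ hden]
    have := hx₀ (max (x₀ - t) 0 + t) hxt
    linarith
  · exact fun x hx => le_trans hpq hx

/-- On `[p, 1]` with `p₀ ≤ p`, the quantile of the censored residual life coincides a.e.
with the residual-life quantile, so their integrals agree. -/
lemma integral_max_eq (F : ℝ → ℝ) (h1 : Tendsto F atTop (nhds 1))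
    (t : ℝ) (ht : F t < 1) {p₀ p : ℝ} (hp₀ : 0 < p₀) (hp : p₀ ≤ p) (hp1 : p < 1) :
    (∫ u in p..1, max (resQuantile F t u) (resQuantile F t p₀))
      = ∫ u in p..1, resQuantile F t u := by
  apply intervalIntegral.integral_congr_ae
  have hne : ∀ᵐ u : ℝ, u ≠ (1 : ℝ) := by
    rw [ae_iff]
    have : {u : ℝ | ¬u ≠ 1} = {1} := by ext u; simp
    rw [this]
    exact measure_singleton 1
  filter_upwards [hne] with u hu hmem
  rw [Set.uIoc_of_le hp1.le] at hmem
  exact max_eq_left (resQ_mono F h1 t ht hp₀ (hp.trans hmem.1.le)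
    (lt_of_le_of_ne hmem.2 hu))

/-- If `max{X_t, F_t^{-1}(p₀)} ≤_{icx} max{Y_t, G_t^{-1}(p₀)}` for every `t` below the right
endpoints of the supports (the increasing convex order being expressed through the quantile
functions, the quantile of `max{X_t, c}` at `u` being `max{F_t^{-1}(u), c}`), then
`X ≤_{p₀-tvar-rl} Y`. -/
theorem stmt11 (μ ν : Measure ℝ) [IsProbabilityMeasure μ] [IsProbabilityMeasure ν]
    (hμ : Integrable id μ) (hν : Integrable id ν)
    (p₀ : ℝ) (hp₀ : p₀ ∈ Set.Ioo (0 : ℝ) 1)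
    (hicx : ∀ t : ℝ, cdf μ t < 1 → cdf ν t < 1 → ∀ p ∈ Set.Ioo (0 : ℝ) 1,
      (∫ u in p..1,
          max (resQuantile (fun x => cdf μ x) t u) (resQuantile (fun x => cdf μ x) t p₀))
        ≤ ∫ u in p..1,
            max (resQuantile (fun x => cdf ν x) t u) (resQuantile (fun x => cdf ν x) t p₀)) :
    TvarRlLE (fun x => cdf μ x) (fun x => cdf ν x) p₀ := by
  intro t hF hG p hp
  have hp0 : 0 < p := lt_of_lt_of_le hp₀.1 hp.1
  have key := hicx t hF hG p ⟨hp0, hp.2⟩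
  rwa [integral_max_eq _ (tendsto_cdf_atTop μ) t hF hp₀.1 hp.1 hp.2,
    integral_max_eq _ (tendsto_cdf_atTop ν) t hG hp₀.1 hp.1 hp.2] at key
end

section
/- Let X and Y be real random variables with finite means, residual life quantile functions F_t^{-1} and G_t^{-1}, and right support endpoints u_X, u_Y; set H_t(u) = G_t^{-1}(u) - F_t^{-1}(u) and L_t(p) = ∫_p^1 H_t(u) du. Suppose that for every t < u_X, u_Y either (i) F_t^{-1}(p) ≤ G_t^{-1}(p) for all p ∈ (0,1), or (ii) there exists p_t ∈ (0,1) such that L_t(p) ≥ 0 for all p ∈ [p_t, 1); and suppose p_0 := sup{p_t : t satisfies (ii)} ∈ (0,1). Then X ≤_{p_0-tvar-rl} Y. -/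
/-!
In case (i) the inequality of tail integrals follows by integrating the pointwise inequality of
the residual quantiles; in case (ii) it is `L_t(p) ≥ 0`, which holds for `p ≥ p₀ ≥ p_t`. The only
analytic input is that residual quantiles are integrable on `(0,1)`: by the layer-cake formula,
`∫₀¹ F_t^{-1} = ∫_0^∞ (1 - F_t(x)) dx = E[(X - t)⁺] / (1 - F(t))`, which is finite since `X` has a
finite mean.
-/

open MeasureTheory ProbabilityTheory

open Set Filter Topology
open scoped ENNReal

section ResidualQuantile

variable {F : ℝ → ℝ} {t u x : ℝ}

lemma nonneg_of_le_resCDF (hu : 0 < u) (hx : u ≤ resCDF F t x) : 0 ≤ x := by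
  by_contra! hneg
  rw [resCDF, if_neg hneg.not_ge] at hx
  linarith

lemma bddBelow_le_resCDF (hu : 0 < u) : BddBelow {x | u ≤ resCDF F t x} :=
  ⟨0, fun _ hx => nonneg_of_le_resCDF hu hx⟩

lemma resQuantile_nonneg (hu : 0 < u) : 0 ≤ resQuantile F t u :=
  Real.sInf_nonneg fun _ hx => nonneg_of_le_resCDF hu hx

lemma resQuantile_le (hu : 0 < u) (hx : u ≤ resCDF F t x) : resQuantile F t u ≤ x :=
  csInf_le (bddBelow_le_resCDF hu) hx

lemma tendsto_resCDF_atTop (hF : Tendsto F atTop (𝓝 1)) (ht : F t < 1) :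
    Tendsto (resCDF F t) atTop (𝓝 1) := by
  have hlim : Tendsto (fun x => (F (x + t) - F t) / (1 - F t)) atTop
      (𝓝 ((1 - F t) / (1 - F t))) :=
    ((hF.comp (tendsto_atTop_add_const_right _ t tendsto_id)).sub_const _).div_const _
  rw [div_self (sub_ne_zero.2 ht.ne')] at hlim
  refine hlim.congr' ?_
  filter_upwards [eventually_ge_atTop 0] with x hx
  rw [resCDF, if_pos hx]

lemma resQuantile_monotoneOn (hF : Tendsto F atTop (𝓝 1)) (ht : F t < 1) :
    MonotoneOn (resQuantile F t) (Ioo 0 1) := by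
  intro u hu v hv huv
  have hne : {x | v ≤ resCDF F t x}.Nonempty :=
    ((tendsto_resCDF_atTop hF ht).eventually (eventually_ge_nhds hv.2)).exists
  exact csInf_le_csInf (bddBelow_le_resCDF hu.1) hne fun _ hx => huv.trans hx

lemma volume_restrict_lt_resQuantile_le :
    volume.restrict (Ioo 0 1) {u | x < resQuantile F t u} ≤ ENNReal.ofReal (1 - resCDF F t x) := by
  rw [Measure.restrict_apply' measurableSet_Ioo, ← Real.volume_Ioo]
  refine measure_mono fun u ⟨hxu, hu⟩ => ⟨?_, hu.2⟩
  by_contra! hle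
  exact (resQuantile_le hu.1 hle).not_gt hxu

end ResidualQuantile

lemma lintegral_measure_Ioi_add_lt_top {μ : Measure ℝ} [IsFiniteMeasure μ]
    (hμ : Integrable id μ) (a : ℝ) : ∫⁻ x in Ioi 0, μ (Ioi (x + a)) < ∞ := by
  have hint : Integrable (fun ω => max (ω - a) 0) μ := (hμ.sub (integrable_const a)).pos_part
  have hlayer := lintegral_eq_lintegral_meas_lt μ (ae_of_all _ fun ω => le_max_right (ω - a) 0)
    hint.aemeasurable
  have hsets : ∀ x ∈ Ioi (0 : ℝ), {ω : ℝ | x < max (ω - a) 0} = Ioi (x + a) := by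
    intro x hx
    ext ω
    simp only [mem_ofPred_eq, mem_Ioi, lt_max_iff, lt_sub_iff_add_lt, or_iff_left_iff_imp]
    exact fun h => absurd hx (not_lt.2 h.le)
  rw [setLIntegral_congr_fun measurableSet_Ioi fun x hx => congrArg μ (hsets x hx).symm,
    ← hlayer]
  exact hint.lintegral_lt_top

section CDF

variable {μ : Measure ℝ} [IsProbabilityMeasure μ] {t : ℝ}

lemma ofReal_one_sub_cdf (y : ℝ) : ENNReal.ofReal (1 - cdf μ y) = μ (Ioi y) := by
  rw [← compl_Iic, measure_compl measurableSet_Iic (measure_ne_top μ _), measure_univ,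
    ← ofReal_cdf, ENNReal.ofReal_sub _ (cdf_nonneg μ y), ENNReal.ofReal_one]

lemma ofReal_one_sub_resCDF_cdf (ht : cdf μ t < 1) {x : ℝ} (hx : 0 ≤ x) :
    ENNReal.ofReal (1 - resCDF (cdf μ) t x) = μ (Ioi (x + t)) / ENNReal.ofReal (1 - cdf μ t) := by
  have hd : 0 < 1 - cdf μ t := sub_pos.2 ht
  have hsub : 1 - resCDF (cdf μ) t x = (1 - cdf μ (x + t)) / (1 - cdf μ t) := by
    rw [resCDF, if_pos hx]
    field_simp
    ring
  rw [hsub, ENNReal.ofReal_div_of_pos hd, ofReal_one_sub_cdf]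

theorem integrableOn_resQuantile_cdf (hμ : Integrable id μ) (ht : cdf μ t < 1) :
    IntegrableOn (resQuantile (cdf μ) t) (Ioo 0 1) := by
  have hd : 0 < ENNReal.ofReal (1 - cdf μ t) := ENNReal.ofReal_pos.2 (sub_pos.2 ht)
  have hmeas : AEMeasurable (resQuantile (cdf μ) t) (volume.restrict (Ioo 0 1)) :=
    aemeasurable_restrict_of_monotoneOn measurableSet_Ioo
      (resQuantile_monotoneOn (tendsto_cdf_atTop μ) ht)
  have hnn : 0 ≤ᵐ[volume.restrict (Ioo 0 1)] resQuantile (cdf μ) t :=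
    (ae_restrict_mem measurableSet_Ioo).mono fun u hu => resQuantile_nonneg hu.1
  refine ⟨hmeas.aestronglyMeasurable, ?_⟩
  rw [hasFiniteIntegral_iff_ofReal hnn, lintegral_eq_lintegral_meas_lt _ hnn hmeas]
  calc ∫⁻ x in Ioi 0, volume.restrict (Ioo 0 1) {u | x < resQuantile (cdf μ) t u}
      ≤ ∫⁻ x in Ioi 0, μ (Ioi (x + t)) / ENNReal.ofReal (1 - cdf μ t) := by
        refine setLIntegral_mono_ae' measurableSet_Ioi (ae_of_all _ fun x hx => ?_)
        rw [← ofReal_one_sub_resCDF_cdf ht (le_of_lt hx)]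
        exact volume_restrict_lt_resQuantile_le
    _ = (ENNReal.ofReal (1 - cdf μ t))⁻¹ * ∫⁻ x in Ioi 0, μ (Ioi (x + t)) := by
        simp_rw [ENNReal.div_eq_inv_mul]
        exact lintegral_const_mul' _ _ (ENNReal.inv_ne_top.2 hd.ne')
    _ < ∞ := ENNReal.mul_lt_top (ENNReal.inv_lt_top.2 hd) (lintegral_measure_Ioi_add_lt_top hμ t)

theorem intervalIntegrable_resQuantile_cdf (hμ : Integrable id μ) (ht : cdf μ t < 1) {p : ℝ}
    (hp : p ∈ Icc (0 : ℝ) 1) : IntervalIntegrable (resQuantile (cdf μ) t) volume p 1 := by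
  rw [intervalIntegrable_iff_integrableOn_Ioo_of_le hp.2]
  exact (integrableOn_resQuantile_cdf hμ ht).mono_set (Ioo_subset_Ioo_left hp.1)

end CDF

/-- Sufficient conditions for the `p₀-tvar-rl` order: if for every `t` below the right endpoints
of both supports either (i) `F_t^{-1}(p) ≤ G_t^{-1}(p)` for all `p ∈ (0,1)`, or (ii) there is
`p_t ∈ (0,1)` with `L_t(p) = ∫_p^1 (G_t^{-1}(u) - F_t^{-1}(u)) du ≥ 0` for all `p ∈ [p_t, 1)`,
and `p₀ := sup{p_t : t satisfies (ii)}` lies in `(0,1)`, then `X ≤_{p₀-tvar-rl} Y`. -/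
theorem stmt15 (μ ν : Measure ℝ) [IsProbabilityMeasure μ] [IsProbabilityMeasure ν]
    (hμ : Integrable id μ) (hν : Integrable id ν)
    (pt : ℝ → ℝ) (p₀ : ℝ)
    (hT : ∀ t : ℝ, cdf μ t < 1 → cdf ν t < 1 →
      (∀ p ∈ Set.Ioo (0 : ℝ) 1,
        resQuantile (fun x => cdf μ x) t p ≤ resQuantile (fun x => cdf ν x) t p) ∨
      (pt t ∈ Set.Ioo (0 : ℝ) 1 ∧ ∀ p ∈ Set.Ico (pt t) 1,
        0 ≤ ∫ u in p..1,
          (resQuantile (fun x => cdf ν x) t u - resQuantile (fun x => cdf μ x) t u)))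
    (hp₀ : p₀ = sSup {q : ℝ | ∃ t : ℝ, cdf μ t < 1 ∧ cdf ν t < 1 ∧
      (pt t ∈ Set.Ioo (0 : ℝ) 1 ∧ ∀ p ∈ Set.Ico (pt t) 1,
        0 ≤ ∫ u in p..1,
          (resQuantile (fun x => cdf ν x) t u - resQuantile (fun x => cdf μ x) t u)) ∧
      q = pt t})
    (hp₀mem : p₀ ∈ Set.Ioo (0 : ℝ) 1) :
    TvarRlLE (fun x => cdf μ x) (fun x => cdf ν x) p₀ := by
  intro t hμt hνt p hp
  have hp_mem : p ∈ Icc (0 : ℝ) 1 := ⟨hp₀mem.1.le.trans hp.1, hp.2.le⟩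
  have hIμ := intervalIntegrable_resQuantile_cdf hμ hμt hp_mem
  have hIν := intervalIntegrable_resQuantile_cdf hν hνt hp_mem
  rcases hT t hμt hνt with hle | hL
  · exact intervalIntegral.integral_mono_on_of_le_Ioo hp.2.le hIμ hIν
      fun u hu => hle u ⟨hp_mem.1.trans_lt hu.1, hu.2⟩
  · have hpt_le : pt t ≤ p₀ := by
      rw [hp₀]
      refine le_csSup ⟨1, ?_⟩ ⟨t, hμt, hνt, hL, rfl⟩
      rintro q ⟨s, -, -, ⟨hs, -⟩, rfl⟩
      exact hs.2.le
    have hLp := hL.2 p ⟨hpt_le.trans hp.1, hp.2⟩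
    rw [intervalIntegral.integral_sub hIν hIμ] at hLp
    exact sub_nonneg.1 hLp
end

section
/- Let X ~ P(a_X, k_X) and Y ~ P(a_Y, k_Y) be classical Pareto random variables (survival function F̄(x) = (k/x)^a for x > k and 1 otherwise). Suppose (i) a_X k_X/(a_X - 1) > a_Y k_Y/(a_Y - 1), (ii) a_X > a_Y > 1, and (iii) k_X > k_Y. Then X ≤_{p_0-tvar-rl} Y for p_0 = 1 - [a_X(a_Y - 1)k_X / (a_Y(a_X - 1)k_Y)]^{a_X a_Y/(a_Y - a_X)}, and this p_0 lies in (0,1). -/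
open MeasureTheory ProbabilityTheory

/-- The distribution function of a classical Pareto random variable `X ~ P(a, k)`:
the survival function is `1` for `x ≤ k` and `(k/x)^a` for `x > k`. -/
noncomputable def paretoCDF (a k : ℝ) (x : ℝ) : ℝ := if x ≤ k then 0 else 1 - (k / x) ^ a

/-!
The residual life at `t` of `X ~ P(a, k)` is `P(a, max k t)` shifted by `t`, so with `q = 1 - p`
`∫_p^1 F_t^{-1} = a max(k, t)/(a - 1) · q^(1 - 1/a) - t q`. The terms `t q` cancel, and since
`max(k_X, t)/k_X ≤ max(k_Y, t)/k_Y` it suffices that `E X · q^(1 - 1/a_X) ≤ E Y · q^(1 - 1/a_Y)`.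
As `1 - 1/a_Y < 1 - 1/a_X`, this holds exactly for `q ≤ (E X / E Y)^(a_X a_Y/(a_Y - a_X)) = 1 - p₀`,
and `E X > E Y` puts `p₀` in `(0, 1)`.
-/

lemma one_sub_paretoCDF (a : ℝ) {k : ℝ} (hk : 0 < k) (x : ℝ) :
    1 - paretoCDF a k x = (k / max k x) ^ a := by
  unfold paretoCDF
  rcases le_or_gt x k with h | h
  · rw [if_pos h, max_eq_left h, div_self hk.ne', Real.one_rpow, sub_zero]
  · rw [if_neg h.not_ge, max_eq_right h.le, sub_sub_cancel]

lemma resCDF_paretoCDF (a : ℝ) {k : ℝ} (hk : 0 < k) (t : ℝ) :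
    resCDF (paretoCDF a k) t = fun x ↦ paretoCDF a (max k t) (x + t) := by
  funext x
  have hm : 0 < max k t := hk.trans_le (le_max_left k t)
  unfold resCDF
  split_ifs with hx
  · have hsurv : 0 < 1 - paretoCDF a k t := by
      rw [one_sub_paretoCDF a hk]; positivity
    have hmax : max (max k t) (x + t) = max k (x + t) := by
      rw [max_assoc, max_eq_right (by linarith : t ≤ x + t)]
    have hratio : 1 - paretoCDF a (max k t) (x + t) =
        (1 - paretoCDF a k (x + t)) / (1 - paretoCDF a k t) := by
      rw [one_sub_paretoCDF a hm, one_sub_paretoCDF a hk, one_sub_paretoCDF a hk, hmax,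
        ← Real.div_rpow (by positivity) (by positivity)]
      congr 1
      field_simp
    rw [← sub_sub_cancel 1 (paretoCDF a (max k t) (x + t)), hratio]
    field_simp
    ring
  · rw [paretoCDF, if_pos (by linarith [le_max_right k t])]

lemma le_paretoCDF_iff {a m u : ℝ} (ha : 0 < a) (hm : 0 < m) (hu₀ : 0 < u) (hu₁ : u < 1)
    (y : ℝ) : u ≤ paretoCDF a m y ↔ m * (1 - u) ^ (-a⁻¹) ≤ y := by
  have hu : 0 < 1 - u := by linarith
  have hw : 0 < (1 - u) ^ a⁻¹ := by positivity
  have hmw : m * (1 - u) ^ (-a⁻¹) = m / (1 - u) ^ a⁻¹ := by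
    rw [Real.rpow_neg hu.le, div_eq_mul_inv]
  rw [hmw]
  rcases le_or_gt y m with hy | hy
  · have : m < m / (1 - u) ^ a⁻¹ := by
      rw [lt_div_iff₀ hw]
      exact mul_lt_of_lt_one_right hm (Real.rpow_lt_one hu.le (by linarith) (by positivity))
    simp only [paretoCDF, if_pos hy]
    constructor <;> intro h <;> linarith
  · have hy0 : 0 < y := hm.trans hy
    rw [paretoCDF, if_neg hy.not_ge, le_sub_comm, ← Real.le_rpow_inv_iff_of_pos (by positivity)
      hu.le ha, div_le_iff₀ hy0, div_le_iff₀ hw, mul_comm]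

lemma resQuantile_paretoCDF {a k u : ℝ} (ha : 0 < a) (hk : 0 < k) (t : ℝ) (hu₀ : 0 < u)
    (hu₁ : u < 1) : resQuantile (paretoCDF a k) t u = max k t * (1 - u) ^ (-a⁻¹) - t := by
  have hm : 0 < max k t := hk.trans_le (le_max_left k t)
  have hset : {x | u ≤ paretoCDF a (max k t) (x + t)} =
      (· + t) ⁻¹' Set.Ici (max k t * (1 - u) ^ (-a⁻¹)) := by
    ext x
    exact le_paretoCDF_iff ha hm hu₀ hu₁ (x + t)
  rw [resQuantile, quantile, resCDF_paretoCDF a hk, hset, Set.preimage_add_const_Ici, csInf_Ici]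

lemma integral_one_sub_rpow {r : ℝ} (hr : -1 < r) (p : ℝ) :
    ∫ u in p..1, (1 - u) ^ r = (1 - p) ^ (r + 1) / (r + 1) := by
  rw [intervalIntegral.integral_comp_sub_left (fun x ↦ x ^ r), sub_self,
    integral_rpow (Or.inl hr), Real.zero_rpow (by linarith), sub_zero]

lemma integral_resQuantile_paretoCDF {a k p : ℝ} (ha : 1 < a) (hk : 0 < k) (t : ℝ)
    (hp₀ : 0 ≤ p) (hp₁ : p ≤ 1) :
    ∫ u in p..1, resQuantile (paretoCDF a k) t u =
      a * max k t / (a - 1) * (1 - p) ^ (1 - a⁻¹) - t * (1 - p) := by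
  have hr : -1 < -a⁻¹ := by
    have : a⁻¹ < 1 := inv_lt_one_of_one_lt₀ ha
    linarith
  have hint : IntervalIntegrable (fun u : ℝ ↦ (1 - u) ^ (-a⁻¹)) volume p 1 := by
    simpa using (intervalIntegral.intervalIntegrable_rpow' hr (a := 1 - p) (b := 0)).comp_sub_left 1
  have hformula : ∫ u in p..1, resQuantile (paretoCDF a k) t u =
      ∫ u in p..1, (max k t * (1 - u) ^ (-a⁻¹) - t) := by
    rw [intervalIntegral.integral_of_le hp₁, intervalIntegral.integral_of_le hp₁,
      integral_Ioc_eq_integral_Ioo, integral_Ioc_eq_integral_Ioo]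
    refine setIntegral_congr_fun measurableSet_Ioo fun u hu ↦ ?_
    exact resQuantile_paretoCDF (by linarith) hk t (hp₀.trans_lt hu.1) hu.2
  rw [hformula, intervalIntegral.integral_sub (hint.const_mul _) intervalIntegrable_const,
    intervalIntegral.integral_const_mul, integral_one_sub_rpow hr, intervalIntegral.integral_const,
    smul_eq_mul, neg_add_eq_sub]
  field_simp

lemma mul_rpow_le_mul_rpow {c d α β q : ℝ} (hc : 0 < c) (hd : 0 < d) (hβα : β < α) (hq : 0 < q)
    (hqle : q ≤ (c / d) ^ (β - α)⁻¹) : c * q ^ α ≤ d * q ^ β := by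
  have h : c / d ≤ q ^ (β - α) :=
    (Real.le_rpow_inv_iff_of_neg hq (by positivity) (by linarith)).1 hqle
  calc c * q ^ α = d * (c / d) * q ^ α := by field_simp
    _ ≤ d * q ^ (β - α) * q ^ α := by gcongr
    _ = d * q ^ β := by rw [mul_assoc, ← Real.rpow_add hq, sub_add_cancel]

lemma max_div_le_max_div {k l : ℝ} (hl : 0 < l) (hlk : l ≤ k) (t : ℝ) :
    max k t / k ≤ max l t / l := by
  rw [div_le_div_iff₀ (hl.trans_le hlk) hl]
  rcases le_total t l with htl | hlt
  · rw [max_eq_left htl, max_eq_left (htl.trans hlk), mul_comm]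
  · rw [max_eq_right hlt]
    rcases le_total t k with htk | hkt
    · rw [max_eq_left htk]; nlinarith
    · rw [max_eq_right hkt]; nlinarith

/-- For classical Pareto random variables `X ~ P(a_X, k_X)` and `Y ~ P(a_Y, k_Y)` with
(i) `a_X k_X/(a_X-1) > a_Y k_Y/(a_Y-1)`, (ii) `a_X > a_Y > 1`, and (iii) `k_X > k_Y`, one has
`X ≤_{p₀-tvar-rl} Y` for
`p₀ = 1 - [a_X(a_Y-1)k_X/(a_Y(a_X-1)k_Y)]^{a_X a_Y/(a_Y-a_X)}`, and this `p₀` lies in `(0,1)`. -/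
theorem stmt18 (aX kX aY kY : ℝ) (hkY : 0 < kY)
    (h1 : aX * kX / (aX - 1) > aY * kY / (aY - 1))
    (h2 : aX > aY) (h2' : aY > 1) (h3 : kX > kY) :
    (1 - (aX * (aY - 1) * kX / (aY * (aX - 1) * kY)) ^ (aX * aY / (aY - aX)))
        ∈ Set.Ioo (0 : ℝ) 1 ∧
      TvarRlLE (paretoCDF aX kX) (paretoCDF aY kY)
        (1 - (aX * (aY - 1) * kX / (aY * (aX - 1) * kY)) ^ (aX * aY / (aY - aX))) := by
  have haX : 1 < aX := h2'.trans h2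
  have hkX : 0 < kX := hkY.trans h3
  -- the means `E X` and `E Y`
  set cX := aX * kX / (aX - 1) with hcX
  set cY := aY * kY / (aY - 1) with hcY
  have hcY₀ : 0 < cY := div_pos (by positivity) (by linarith)
  have hC : aX * (aY - 1) * kX / (aY * (aX - 1) * kY) = cX / cY := by
    rw [hcX, hcY]
    field_simp
  have he : aX * aY / (aY - aX) = ((1 - aY⁻¹) - (1 - aX⁻¹))⁻¹ := by
    rw [show (1 - aY⁻¹) - (1 - aX⁻¹) = (aY - aX) / (aX * aY) by field_simp; ring, inv_div]
  have hC₁ : 1 < cX / cY := (one_lt_div hcY₀).2 h1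
  have hq₀ : 0 < (cX / cY) ^ (aX * aY / (aY - aX)) := by positivity
  have hq₁ : (cX / cY) ^ (aX * aY / (aY - aX)) < 1 :=
    Real.rpow_lt_one_of_one_lt_of_neg hC₁ (div_neg_of_pos_of_neg (by positivity) (by linarith))
  rw [hC]
  refine ⟨⟨by linarith, by linarith⟩, fun t _ _ p ⟨hp₀, hp₁⟩ ↦ ?_⟩
  rw [integral_resQuantile_paretoCDF haX hkX t (by linarith) hp₁.le,
    integral_resQuantile_paretoCDF h2' hkY t (by linarith) hp₁.le]
  have hcore : cX * (1 - p) ^ (1 - aX⁻¹) ≤ cY * (1 - p) ^ (1 - aY⁻¹) :=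
    mul_rpow_le_mul_rpow (hcY₀.trans h1) hcY₀ (by gcongr) (by linarith) (by rw [← he]; linarith)
  have hscale := max_div_le_max_div hkY h3.le t
  have htail : aX * max kX t / (aX - 1) * (1 - p) ^ (1 - aX⁻¹) ≤
      aY * max kY t / (aY - 1) * (1 - p) ^ (1 - aY⁻¹) :=
    calc aX * max kX t / (aX - 1) * (1 - p) ^ (1 - aX⁻¹)
        = max kX t / kX * (cX * (1 - p) ^ (1 - aX⁻¹)) := by rw [hcX]; field_simp
      _ ≤ max kY t / kY * (cY * (1 - p) ^ (1 - aY⁻¹)) := by gcongr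
      _ = aY * max kY t / (aY - 1) * (1 - p) ^ (1 - aY⁻¹) := by rw [hcY]; field_simp
  linarith
end

section
/- Let X ~ Logistic(μ_X, σ) and Y ~ Logistic(μ_Y, σ) be logistic random variables with common scale σ > 0 and μ_X < μ_Y. Then the residual life quantile functions, given by F_t^{-1}(p) = σ log[(p + e^{(t-μ_X)/σ})/(1-p)] + μ_X - t and G_t^{-1}(p) = σ log[(p + e^{(t-μ_Y)/σ})/(1-p)] + μ_Y - t, satisfy F_t^{-1}(p) ≤ G_t^{-1}(p) for all p ∈ (0,1) and all t ∈ ℝ; in particular X ≤_{hr} Y and hence X ≤_{p_0-tvar-rl} Y for every p_0 ∈ (0,1). Moreover, if instead μ_X = μ_Y = μ and 0 < σ_X ≤ σ_Y (X ~ Logistic(μ, σ_X), Y ~ Logistic(μ, σ_Y)), then for every t ≥ μ and every p ∈ (0,1), F_t^{-1}(p) ≤ G_t^{-1}(p). -/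
/-! The residual life of `Logistic(μ, σ)` at `t` has distribution function
`(e^{x/σ} - 1) / (q + e^{x/σ})` on `x ≥ 0`, where `q = e^{(μ-t)/σ}`; inverting it gives the
residual quantile `σ log ((1 + p q) / (1 - p))`. This is increasing in `μ`, and for `t ≥ μ` also
in `σ`, being `σ` times a nonnegative logarithm that grows with `σ`. Its only singularity on
`[p, 1]` is logarithmic at `1`, so the pointwise comparison integrates to the tail-value-at-risk
order. -/

open MeasureTheory ProbabilityTheory

/-- The distribution function of a logistic random variable `X ~ Logistic(μ, σ)`:
the survival function is `1/(1 + exp((x-μ)/σ))`. -/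
noncomputable def logisticCDF (μ σ : ℝ) (x : ℝ) : ℝ := 1 - 1 / (1 + Real.exp ((x - μ) / σ))

open Set Real

lemma quantile_eq_of_forall_le_iff {F : ℝ → ℝ} {p c : ℝ} (h : ∀ x, p ≤ F x ↔ c ≤ x) :
    quantile F p = c := by
  rw [quantile, show {x | p ≤ F x} = Ici c from Set.ext h, csInf_Ici]

lemma resCDF_logisticCDF_of_nonneg {μ σ t x : ℝ} (hx : 0 ≤ x) :
    resCDF (logisticCDF μ σ) t x
      = (exp (x / σ) - 1) / (exp ((μ - t) / σ) + exp (x / σ)) := by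
  have hxt : exp ((x + t - μ) / σ) = exp (x / σ) / exp ((μ - t) / σ) := by
    rw [← exp_sub]; congr 1; ring
  have ht : exp ((t - μ) / σ) = 1 / exp ((μ - t) / σ) := by
    rw [one_div, ← exp_neg]; congr 1; ring
  simp only [resCDF, if_pos hx, logisticCDF, hxt, ht]
  have hq := exp_pos ((μ - t) / σ)
  have hE := exp_pos (x / σ)
  field_simp
  ring

lemma le_resCDF_logisticCDF_iff {μ σ t p x : ℝ} (hσ : 0 < σ) (hp : 0 < p) :
    p ≤ resCDF (logisticCDF μ σ) t x ↔ 1 + p * exp ((μ - t) / σ) ≤ (1 - p) * exp (x / σ) := by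
  have hq := exp_pos ((μ - t) / σ)
  have hE := exp_pos (x / σ)
  rcases le_or_gt 0 x with hx | hx
  · rw [resCDF_logisticCDF_of_nonneg hx, le_div_iff₀ (by positivity)]
    constructor <;> intro h <;> linarith
  · have hE1 : exp (x / σ) < 1 := exp_lt_one_iff.2 (div_neg_of_neg_of_pos hx hσ)
    simp only [resCDF, if_neg (not_le.2 hx)]
    constructor <;> intro h
    · linarith
    · nlinarith [mul_pos hp hq, mul_pos hp hE]

theorem resQuantile_logisticCDF {μ σ t p : ℝ} (hσ : 0 < σ) (hp : p ∈ Ioo (0 : ℝ) 1) :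
    resQuantile (logisticCDF μ σ) t p = σ * log ((1 + p * exp ((μ - t) / σ)) / (1 - p)) := by
  have h1p : 0 < 1 - p := sub_pos.2 hp.2
  have hp0 := hp.1
  have hK : 0 < (1 + p * exp ((μ - t) / σ)) / (1 - p) := by positivity
  refine quantile_eq_of_forall_le_iff fun x => ?_
  rw [le_resCDF_logisticCDF_iff hσ hp.1, ← div_le_iff₀' h1p, ← le_div_iff₀' hσ,
    log_le_iff_le_exp hK]

theorem resQuantile_logisticCDF_eq_log_add_exp {μ σ t p : ℝ} (hσ : 0 < σ)
    (hp : p ∈ Ioo (0 : ℝ) 1) :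
    resQuantile (logisticCDF μ σ) t p
      = σ * log ((p + exp ((t - μ) / σ)) / (1 - p)) + μ - t := by
  have hfactor : p + exp ((t - μ) / σ) = exp ((t - μ) / σ) * (1 + p * exp ((μ - t) / σ)) := by
    rw [show (μ - t) / σ = -((t - μ) / σ) by ring, exp_neg]
    field_simp
    ring
  have hp0 := hp.1
  rw [resQuantile_logisticCDF hσ hp, hfactor, mul_div_assoc,
    log_mul (exp_pos _).ne' (div_pos (by positivity) (sub_pos.2 hp.2)).ne', log_exp]
  field_simp
  ring

theorem resQuantile_logisticCDF_mono_location {μX μY σ t p : ℝ} (hσ : 0 < σ) (hμ : μX ≤ μY)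
    (hp : p ∈ Ioo (0 : ℝ) 1) :
    resQuantile (logisticCDF μX σ) t p ≤ resQuantile (logisticCDF μY σ) t p := by
  have h1p : 0 < 1 - p := sub_pos.2 hp.2
  have hp0 := hp.1
  rw [resQuantile_logisticCDF hσ hp, resQuantile_logisticCDF hσ hp]
  gcongr

theorem resQuantile_logisticCDF_mono_scale {μ σX σY t p : ℝ} (hσX : 0 < σX) (hσ : σX ≤ σY)
    (ht : μ ≤ t) (hp : p ∈ Ioo (0 : ℝ) 1) :
    resQuantile (logisticCDF μ σX) t p ≤ resQuantile (logisticCDF μ σY) t p := by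
  have hσY : 0 < σY := hσX.trans_le hσ
  have h1p : 0 < 1 - p := sub_pos.2 hp.2
  have hp0 := hp.1
  have hlog_nonneg : 0 ≤ log ((1 + p * exp ((μ - t) / σX)) / (1 - p)) := by
    refine log_nonneg ((le_div_iff₀ h1p).2 ?_)
    nlinarith [mul_pos hp0 (exp_pos ((μ - t) / σX))]
  rw [resQuantile_logisticCDF hσX hp, resQuantile_logisticCDF hσY hp]
  calc σX * log ((1 + p * exp ((μ - t) / σX)) / (1 - p))
      ≤ σY * log ((1 + p * exp ((μ - t) / σX)) / (1 - p)) := by gcongr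
    _ ≤ σY * log ((1 + p * exp ((μ - t) / σY)) / (1 - p)) := by
      gcongr σY * log ((1 + p * exp ?_) / _)
      rw [div_le_div_iff₀ hσX hσY]
      nlinarith

theorem intervalIntegrable_resQuantile_logisticCDF {μ σ t p : ℝ} (hσ : 0 < σ) (hp₀ : 0 ≤ p)
    (hp₁ : p ≤ 1) :
    IntervalIntegrable (resQuantile (logisticCDF μ σ) t) volume p 1 := by
  have hlog_one_sub : IntervalIntegrable (fun u => log (1 - u)) volume p 1 := by
    simpa using (intervalIntegral.intervalIntegrable_log' (a := 1 - p) (b := 0)).comp_sub_left 1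
  have hlog_num : IntervalIntegrable (fun u => log (1 + u * exp ((μ - t) / σ))) volume p 1 := by
    refine ContinuousOn.intervalIntegrable (ContinuousOn.log (by fun_prop) fun u hu => ?_)
    have hu0 : 0 ≤ u := hp₀.trans (uIcc_of_le hp₁ ▸ hu).1
    positivity
  refine ((hlog_num.sub hlog_one_sub).const_mul σ).congr_uIoo fun u hu => ?_
  rw [uIoo_of_le hp₁] at hu
  have hu0 := hp₀.trans_lt hu.1
  rw [resQuantile_logisticCDF hσ ⟨hu0, hu.2⟩, log_div (by positivity) (sub_pos.2 hu.2).ne']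

theorem tvarRlLE_of_resQuantile_le {F G : ℝ → ℝ} {p₀ : ℝ}
    (hF : ∀ t, ∀ p ∈ Ico p₀ 1, IntervalIntegrable (resQuantile F t) volume p 1)
    (hG : ∀ t, ∀ p ∈ Ico p₀ 1, IntervalIntegrable (resQuantile G t) volume p 1)
    (hle : ∀ t, F t < 1 → G t < 1 → ∀ u ∈ Ioo p₀ 1, resQuantile F t u ≤ resQuantile G t u) :
    TvarRlLE F G p₀ := fun t hFt hGt p hp =>
  intervalIntegral.integral_mono_on_of_le_Ioo hp.2.le (hF t p hp) (hG t p hp)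
    fun u hu => hle t hFt hGt u ⟨hp.1.trans_lt hu.1, hu.2⟩

/-- For logistic random variables with common scale `σ > 0` and `μ_X < μ_Y`: the residual life
quantile functions, given by `F_t^{-1}(p) = σ log[(p + e^{(t-μ_X)/σ})/(1-p)] + μ_X - t` and
analogously for `Y`, satisfy `F_t^{-1}(p) ≤ G_t^{-1}(p)` for all `p ∈ (0,1)` and all `t ∈ ℝ`
(so `X ≤_{hr} Y`), and hence `X ≤_{p₀-tvar-rl} Y` for every `p₀ ∈ (0,1)`. Moreover, if instead
`μ_X = μ_Y = μ` and `0 < σ_X ≤ σ_Y`, then `F_t^{-1}(p) ≤ G_t^{-1}(p)` for all `t ≥ μ` and all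
`p ∈ (0,1)`. -/
theorem stmt19 :
    (∀ μX μY σ : ℝ, 0 < σ → μX < μY →
      (∀ t : ℝ, ∀ p ∈ Set.Ioo (0 : ℝ) 1,
        resQuantile (logisticCDF μX σ) t p
          = σ * Real.log ((p + Real.exp ((t - μX) / σ)) / (1 - p)) + μX - t ∧
        resQuantile (logisticCDF μY σ) t p
          = σ * Real.log ((p + Real.exp ((t - μY) / σ)) / (1 - p)) + μY - t ∧
        resQuantile (logisticCDF μX σ) t p ≤ resQuantile (logisticCDF μY σ) t p) ∧
      ∀ p₀ ∈ Set.Ioo (0 : ℝ) 1, TvarRlLE (logisticCDF μX σ) (logisticCDF μY σ) p₀) ∧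
    (∀ μ σX σY : ℝ, 0 < σX → σX ≤ σY → ∀ t : ℝ, μ ≤ t → ∀ p ∈ Set.Ioo (0 : ℝ) 1,
      resQuantile (logisticCDF μ σX) t p ≤ resQuantile (logisticCDF μ σY) t p) := by
  refine ⟨fun μX μY σ hσ hμ => ⟨fun t p hp => ?_, fun p₀ hp₀ => ?_⟩,
    fun μ σX σY hσX hσ t ht p hp => resQuantile_logisticCDF_mono_scale hσX hσ ht hp⟩
  · exact ⟨resQuantile_logisticCDF_eq_log_add_exp hσ hp,
      resQuantile_logisticCDF_eq_log_add_exp hσ hp,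
      resQuantile_logisticCDF_mono_location hσ hμ.le hp⟩
  · have hintegrable {μ : ℝ} (t : ℝ) (p : ℝ) (hp : p ∈ Ico p₀ 1) :=
      intervalIntegrable_resQuantile_logisticCDF (μ := μ) (t := t) hσ
        (hp₀.1.le.trans hp.1) hp.2.le
    exact tvarRlLE_of_resQuantile_le hintegrable hintegrable fun t _ _ u hu =>
      resQuantile_logisticCDF_mono_location hσ hμ.le ⟨hp₀.1.trans hu.1, hu.2⟩
end
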